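/- Let G be a locally compact, Hausdorff, étale groupoid and let E: C*_r(G) → C₀(G⁰) be the conditional expectation extending restriction of functions to the unit space. Then E is faithful: for every b ∈ C*_r(G), if E(b*b) = 0 then b = 0. -/

import Mathlib

open scoped BigOperators CompactlySupported ZeroAtInfty
open Filter Topology
open scoped Classical

universe u

/-- A topological groupoid, described by its space of arrows `Γ`, with source `s`,
range `r`, inversion `inv` and a (total, junk-valued off the composable set)
composition `mul`.  All algebraic axioms are only imposed on composable pairs. -/
structure TopGroupoid (Γ : Type u) [TopologicalSpace Γ] where
  s : Γ → Γ
  r : Γ → Γ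
  inv : Γ → Γ
  mul : Γ → Γ → Γ
  s_s : ∀ g, s (s g) = s g
  r_s : ∀ g, r (s g) = s g
  s_r : ∀ g, s (r g) = r g
  r_r : ∀ g, r (r g) = r g
  s_mul : ∀ g h, s g = r h → s (mul g h) = s h
  r_mul : ∀ g h, s g = r h → r (mul g h) = r g
  mul_assoc' : ∀ g h k, s g = r h → s h = r k → mul (mul g h) k = mul g (mul h k)
  unit_mul : ∀ g, mul (r g) g = g
  mul_unit : ∀ g, mul g (s g) = g
  s_inv : ∀ g, s (inv g) = r g
  r_inv : ∀ g, r (inv g) = s g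
  inv_inv : ∀ g, inv (inv g) = g
  inv_mul : ∀ g, mul (inv g) g = s g
  mul_inv : ∀ g, mul g (inv g) = r g
  continuous_inv : Continuous inv
  continuousOn_mul : ContinuousOn (fun p : Γ × Γ => mul p.1 p.2) {p : Γ × Γ | s p.1 = r p.2}

namespace TopGroupoid

variable {Γ : Type u} [TopologicalSpace Γ] (G : TopGroupoid Γ)

/-- The unit space `G⁰` of the groupoid, i.e. the set of units. -/
def unitSpace : Set Γ := Set.range G.s

/-- A groupoid is étale when its source map is a local homeomorphism. -/
def IsEtale : Prop := IsLocalHomeomorph G.s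

/-- Topologically principal: the units with trivial isotropy are dense in the unit space. -/
def TopPrincipal : Prop :=
  G.unitSpace ⊆ closure {u | u ∈ G.unitSpace ∧ ∀ g, G.r g = u → G.s g = u → g = u}

/-- Minimal: every orbit is dense in the unit space. -/
def Minimal : Prop :=
  ∀ u ∈ G.unitSpace, G.unitSpace ⊆ closure {v | ∃ g, G.s g = u ∧ G.r g = v}

/-- A set of units is invariant when it is closed under taking ranges of arrows
whose source lies in the set. -/
def Invariant (D : Set Γ) : Prop := ∀ g, G.s g ∈ D → G.r g ∈ D

/-- A bisection: both the source and the range map are injective on it. -/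
def IsBisection (B : Set Γ) : Prop := B.InjOn G.s ∧ B.InjOn G.r

/-- An ample groupoid: there is a basis of compact open bisections. -/
def Ample : Prop :=
  ∀ g : Γ, ∀ V : Set Γ, g ∈ V → IsOpen V →
    ∃ B : Set Γ, IsCompact B ∧ IsOpen B ∧ G.IsBisection B ∧ g ∈ B ∧ B ⊆ V

/-- The convolution product of two functions on the groupoid. -/
noncomputable def conv (f g : Γ → ℂ) : Γ → ℂ :=
  fun γ => ∑ᶠ η ∈ {η : Γ | G.r η = G.r γ}, f η * g (G.mul (G.inv η) γ)

/-- The involution `f*(γ) = conj (f (γ⁻¹))`. -/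
noncomputable def starFun (f : Γ → ℂ) : Γ → ℂ :=
  fun γ => (starRingEnd ℂ) (f (G.inv γ))

/-- The fibre `Gu = s⁻¹(u)` over a unit `u`. -/
def fiber (u : Γ) : Set Γ := {γ : Γ | G.s γ = u}

/-- The `I`-norm of a function on the groupoid. -/
noncomputable def normI (f : Γ → ℂ) : ℝ :=
  ⨆ u : G.unitSpace,
    max (∑ᶠ γ ∈ G.fiber (u : Γ), ‖f γ‖) (∑ᶠ γ ∈ {γ : Γ | G.r γ = (u : Γ)}, ‖f γ‖)

/-- The point mass `δ_γ ∈ ℓ²(Gu)`. -/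
noncomputable def delta (u : Γ) (γ : ↥(G.fiber u)) : lp (fun _ : ↥(G.fiber u) => ℂ) 2 :=
  letI := Classical.decEq ↥(G.fiber u)
  lp.single 2 γ 1

end TopGroupoid

/-- The reduced groupoid `C*`-algebra of a topological groupoid `G`:
a C*-algebra `A` together with a linear map `j` from `C_c(G)` with dense range which is
multiplicative for convolution and `*`-preserving, together with, for each unit `u`, the
regular representation `π_u` on `ℓ²(Gu)` (specified by its matrix coefficients
`π_u(f) δ_γ = Σ_{s(η)=r(γ)} f(η) δ_{ηγ}`), such that the norm on `A` is the supremum of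
the norms in the regular representations. -/
structure ReducedCStarAlg {Γ : Type u} [TopologicalSpace Γ] (G : TopGroupoid Γ) where
  A : Type u
  [nonUnitalNormedRing : NonUnitalNormedRing A]
  [starRing : StarRing A]
  [cstarRing : CStarRing A]
  [normedSpace : NormedSpace ℂ A]
  [isScalarTower : IsScalarTower ℂ A A]
  [smulCommClass : SMulCommClass ℂ A A]
  [starModule : StarModule ℂ A]
  [completeSpace : CompleteSpace A]
  j : C_c(Γ, ℂ) →ₗ[ℂ] A
  dense_range : DenseRange ⇑j
  j_mul : ∀ f g h : C_c(Γ, ℂ), ⇑h = G.conv ⇑f ⇑g → j f * j g = j h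
  j_star : ∀ f h : C_c(Γ, ℂ), ⇑h = G.starFun ⇑f → star (j f) = j h
  π : ∀ u : Γ, C_c(Γ, ℂ) →
      (lp (fun _ : ↥(G.fiber u) => ℂ) 2 →L[ℂ] lp (fun _ : ↥(G.fiber u) => ℂ) 2)
  π_apply : ∀ (u : Γ) (f : C_c(Γ, ℂ)) (γ ξ : ↥(G.fiber u)),
      (π u f (G.delta u γ)) ξ = f (G.mul (ξ : Γ) (G.inv (γ : Γ)))
  norm_j : ∀ f : C_c(Γ, ℂ), ‖j f‖ = ⨆ u : G.unitSpace, ‖π (u : Γ) f‖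

attribute [instance] ReducedCStarAlg.nonUnitalNormedRing ReducedCStarAlg.starRing
  ReducedCStarAlg.cstarRing ReducedCStarAlg.normedSpace ReducedCStarAlg.isScalarTower
  ReducedCStarAlg.smulCommClass ReducedCStarAlg.starModule ReducedCStarAlg.completeSpace

namespace ReducedCStarAlg

variable {Γ : Type u} [TopologicalSpace Γ] {G : TopGroupoid Γ}

/-- The copy of `C₀(G⁰)` inside the reduced groupoid `C*`-algebra: the closure of the image
of the compactly supported continuous functions supported in the unit space. -/
def unitAlgebra (S : ReducedCStarAlg G) : Set S.A :=
  closure (⇑S.j '' {f : C_c(Γ, ℂ) | Function.support ⇑f ⊆ G.unitSpace})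

end ReducedCStarAlg

/-- Positivity in a `*`-algebra: `a = b* b` for some `b`. -/
def IsPositiveElem {A : Type*} [Mul A] [Star A] (a : A) : Prop := ∃ b : A, a = star b * b

/-- The conditional expectation `E : C*_r(G) → C₀(G⁰) ⊆ C*_r(G)` extending the restriction
map `C_c(G) → C_c(G⁰)`: it is characterised among contractive linear maps by the property
that it sends (the image in `C*_r(G)` of) `f ∈ C_c(G)` to (the image of) `f|_{G⁰}`. -/
def IsRestrictionExpectation {Γ : Type u} [TopologicalSpace Γ] {G : TopGroupoid Γ}
    (S : ReducedCStarAlg G) (E : S.A →L[ℂ] S.A) : Prop :=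
  ‖E‖ ≤ 1 ∧
    ∀ f f₀ : C_c(Γ, ℂ), (∀ γ : Γ, f₀ γ = if γ ∈ G.unitSpace then f γ else 0) →
      E (S.j f) = S.j f₀

/-!
For a point `g` of `G` with `u = s g`, the functional `f ↦ f g` on `C_c(G)` is the matrix
coefficient `⟨π_u(f) δ_u, δ_g⟩`. Cutting `f` into finitely many pieces supported in open
bisections, on each of which `π_u` acts as a weighted partial permutation of the basis, shows that
`u ↦ ‖π_u f‖` is bounded, so `‖π_u f‖ ≤ ‖f‖_r`; hence `π_u` extends to a contractive
representation `ρ_u` of `C*_r(G)`, and the coefficients extend to functionals `ε_g`.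

On units `ε_u ∘ E = ε_u`, so `E(b* b) = 0` gives `ε_u(b* b) = 0`. On `C_c(G)` one computes
`(f* ∗ f)(u) = ∑_{r η = u} |f(η⁻¹)|² ≥ |f g|²`, and by continuity `|ε_g(x)|² ≤ |ε_{s g}(x* x)|`
for all `x`. Thus every coefficient of every `ρ_u(b)` vanishes, `ρ_u(b) = 0`, and
`‖b‖ = sup_u ‖ρ_u(b)‖ = 0`.
-/

open Set Function
open scoped ENNReal

local notation "ℓ²(" ι ")" => lp (fun _ : ι => ℂ) 2

namespace lp

variable {ι : Type*} [DecidableEq ι]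

lemma continuousLinearMap_ext_single {T T' : ℓ²(ι) →L[ℂ] ℓ²(ι)}
    (h : ∀ γ ξ, T (lp.single 2 γ 1) ξ = T' (lp.single 2 γ 1) ξ) : T = T' :=
  lp.ext_continuousLinearMap (by norm_num) fun γ =>
    ContinuousLinearMap.ext_ring (lp.ext (funext (h γ)))

lemma hasSum_mul_apply_single (T : ℓ²(ι) →L[ℂ] ℓ²(ι)) (v : ℓ²(ι)) (ξ : ι) :
    HasSum (fun γ => v γ * T (lp.single 2 γ 1) ξ) (T v ξ) := by
  refine (((lp.hasSum_single (by norm_num) v).mapL T).mapL (lp.evalCLM ℂ _ 2 ξ)).congr_fun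
    fun γ => ?_
  have hsingle : lp.single (E := fun _ : ι => ℂ) 2 γ (v γ) = v γ • lp.single 2 γ 1 := by
    rw [← lp.single_smul, smul_eq_mul, mul_one]
  simp [hsingle, lp.evalCLM]

lemma opNorm_le_of_subsingleton_rows_cols {T : ℓ²(ι) →L[ℂ] ℓ²(ι)} {C : ℝ} (hC : 0 ≤ C)
    (hrow : ∀ ξ γ γ', T (lp.single 2 γ 1) ξ ≠ 0 → T (lp.single 2 γ' 1) ξ ≠ 0 → γ = γ')
    (hcol : ∀ ξ ξ' γ, T (lp.single 2 γ 1) ξ ≠ 0 → T (lp.single 2 γ 1) ξ' ≠ 0 → ξ = ξ')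
    (hbound : ∀ ξ γ, ‖T (lp.single 2 γ 1) ξ‖ ≤ C) : ‖T‖ ≤ C := by
  refine T.opNorm_le_bound hC fun v => ?_
  set c : ι → ι → ℂ := fun ξ γ => T (lp.single 2 γ 1) ξ
  let P : ι → Prop := fun ξ => ∃ γ, c ξ γ ≠ 0
  -- the column of the nonzero entry of row `ξ`, if there is one
  let σ : ι → ι := fun ξ => if h : P ξ then h.choose else ξ
  have hσ : ∀ ξ, P ξ → c ξ (σ ξ) ≠ 0 := fun ξ h => by
    simpa only [σ, dif_pos h] using h.choose_spec
  have hrowσ : ∀ ξ, P ξ → T v ξ = v (σ ξ) * c ξ (σ ξ) := fun ξ h =>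
    (hasSum_mul_apply_single T v ξ).unique <| hasSum_single (σ ξ) fun γ hγ =>
      mul_eq_zero_of_right _ (by_contra fun hc => hγ (hrow ξ γ (σ ξ) hc (hσ ξ h)))
  have hzero : ∀ ξ, ¬ P ξ → T v ξ = 0 := fun ξ h =>
    (hasSum_mul_apply_single T v ξ).unique <| hasSum_zero.congr_fun fun γ =>
      mul_eq_zero_of_right _ (not_not.mp (not_exists.mp h γ))
  have hσinj : Set.InjOn σ {ξ | P ξ} := fun ξ hξ ξ' hξ' heq =>
    hcol ξ ξ' (σ ξ) (hσ ξ hξ) (heq ▸ hσ ξ' hξ')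
  set q := (2 : ℝ≥0∞).toReal
  have hq : 0 < q := by norm_num [q]
  refine lp.norm_le_of_forall_sum_le hq (by positivity) fun s => ?_
  calc ∑ ξ ∈ s, ‖T v ξ‖ ^ q = ∑ ξ ∈ s with P ξ, ‖T v ξ‖ ^ q := by
        refine (Finset.sum_filter_of_ne fun ξ _ hne => ?_).symm
        by_contra hP
        simp [hzero ξ hP, Real.zero_rpow hq.ne'] at hne
    _ ≤ ∑ ξ ∈ s with P ξ, C ^ q * ‖v (σ ξ)‖ ^ q := by
        refine Finset.sum_le_sum fun ξ hξ => ?_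
        rw [hrowσ ξ (Finset.mem_filter.mp hξ).2, norm_mul, ← Real.mul_rpow hC (norm_nonneg _),
          mul_comm C]
        exact Real.rpow_le_rpow (by positivity)
          (mul_le_mul_of_nonneg_left (hbound _ _) (norm_nonneg _)) hq.le
    _ = C ^ q * ∑ γ ∈ (s.filter P).image σ, ‖v γ‖ ^ q := by
        have hinj : ∀ ξ ∈ s.filter P, ∀ ξ' ∈ s.filter P, σ ξ = σ ξ' → ξ = ξ' :=
          fun ξ hξ ξ' hξ' => hσinj (Finset.mem_filter.mp hξ).2 (Finset.mem_filter.mp hξ').2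
        rw [Finset.mul_sum, Finset.sum_image hinj]
    _ ≤ C ^ q * ‖v‖ ^ q := by gcongr; exact lp.sum_rpow_le_norm_rpow hq v _
    _ = (C * ‖v‖) ^ q := (Real.mul_rpow hC (norm_nonneg _)).symm

end lp

lemma IsLocallyInjective.finite_inter_preimage_singleton {X Y : Type*} [TopologicalSpace X]
    {f : X → Y} (hf : IsLocallyInjective f) {K : Set X} (hK : IsCompact K) (y : Y) :
    (K ∩ f ⁻¹' {y}).Finite := by
  choose U hUo hUmem hUinj using hf
  obtain ⟨t, -, hcov⟩ := hK.elim_nhds_subcover U fun x _ => (hUo x).mem_nhds (hUmem x)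
  have hsub : K ∩ f ⁻¹' {y} ⊆ ⋃ x ∈ t, U x ∩ f ⁻¹' {y} := fun z ⟨hzK, hz⟩ => by
    obtain ⟨x, hx, hzU⟩ := mem_iUnion₂.mp (hcov hzK)
    exact mem_biUnion hx ⟨hzU, hz⟩
  refine (t.finite_toSet.biUnion fun x _ => Subsingleton.finite ?_).subset hsub
  rintro a ⟨haU, ha⟩ b ⟨hbU, hb⟩
  exact hUinj x haU hbU (ha.trans hb.symm)

namespace TopGroupoid

variable {Γ : Type u} [TopologicalSpace Γ] (G : TopGroupoid Γ)

lemma mem_unitSpace {u : Γ} : u ∈ G.unitSpace ↔ G.s u = u :=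
  ⟨fun ⟨g, hg⟩ => hg ▸ G.s_s g, fun h => ⟨u, h⟩⟩

lemma r_eq_self_of_s_eq_self {u : Γ} (hu : G.s u = u) : G.r u = u := by
  rw [← hu, G.r_s]

lemma inv_eq_self_of_s_eq_self {u : Γ} (hu : G.s u = u) : G.inv u = u := by
  have hs : G.s (G.inv u) = u := by rw [G.s_inv, G.r_eq_self_of_s_eq_self hu]
  calc G.inv u = G.mul (G.inv u) (G.s (G.inv u)) := (G.mul_unit _).symm
    _ = u := by rw [hs, G.inv_mul, hu]

lemma inv_mul_cancel_left {g h : Γ} (hc : G.s g = G.r h) : G.mul (G.inv g) (G.mul g h) = h := by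
  rw [← G.mul_assoc' _ _ _ (G.s_inv g) hc, G.inv_mul, hc, G.unit_mul]

lemma mul_inv_cancel_left {g h : Γ} (hc : G.r g = G.r h) : G.mul g (G.mul (G.inv g) h) = h := by
  rw [← G.mul_assoc' _ _ _ (G.r_inv g).symm (by rw [G.s_inv, hc]), G.mul_inv, hc, G.unit_mul]

lemma inv_mul_cancel_right {g h : Γ} (hc : G.s g = G.s h) : G.mul (G.mul g (G.inv h)) h = g := by
  rw [G.mul_assoc' _ _ _ (by rw [G.r_inv, hc]) (G.s_inv h), G.inv_mul, ← hc, G.mul_unit]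

lemma inv_mul_inv_mul_cancel {g h : Γ} (hc : G.s g = G.s h) :
    G.mul (G.inv (G.mul g (G.inv h))) g = h := by
  have hs : G.s (G.mul g (G.inv h)) = G.r h := by
    rw [G.s_mul _ _ (by rw [G.r_inv, hc]), G.s_inv]
  simpa only [G.inv_mul_cancel_right hc] using G.inv_mul_cancel_left hs

lemma delta_eq_single (u : Γ) (γ : G.fiber u) : G.delta u γ = lp.single 2 γ 1 := by
  rw [delta]
  congr!

def invHomeo : Γ ≃ₜ Γ where
  toFun := G.inv
  invFun := G.inv
  left_inv := G.inv_inv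
  right_inv := G.inv_inv
  continuous_toFun := G.continuous_inv
  continuous_invFun := G.continuous_inv

lemma support_conv_subset (f g : Γ → ℂ) :
    support (G.conv f g) ⊆ (fun p : Γ × Γ => G.mul p.1 p.2) ''
      ((tsupport f ×ˢ tsupport g) ∩ {p | G.s p.1 = G.r p.2}) := by
  intro γ hγ
  obtain ⟨η, hη, hne⟩ := exists_ne_zero_of_finsum_mem_ne_zero hγ
  have hcomp : G.s (G.inv η) = G.r γ := by rw [G.s_inv]; exact hη
  refine ⟨(η, G.mul (G.inv η) γ), ⟨⟨subset_tsupport _ (left_ne_zero_of_mul hne),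
    subset_tsupport _ (right_ne_zero_of_mul hne)⟩, ?_⟩, G.mul_inv_cancel_left hη⟩
  change G.s η = G.r (G.mul (G.inv η) γ)
  rw [G.r_mul _ _ hcomp, G.r_inv]

lemma hasCompactSupport_conv [T2Space Γ] (hs : Continuous G.s) (hr : Continuous G.r)
    {f g : Γ → ℂ} (hf : HasCompactSupport f) (hg : HasCompactSupport g) :
    HasCompactSupport (G.conv f g) := by
  have hK : IsCompact ((fun p : Γ × Γ => G.mul p.1 p.2) ''
      ((tsupport f ×ˢ tsupport g) ∩ {p | G.s p.1 = G.r p.2})) :=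
    ((hf.prod hg).inter_right (isClosed_eq (hs.comp continuous_fst) (hr.comp continuous_snd)))
      |>.image_of_continuousOn (G.continuousOn_mul.mono inter_subset_right)
  exact hK.of_isClosed_subset isClosed_closure
    (closure_minimal (G.support_conv_subset f g) hK.isClosed)

end TopGroupoid

namespace TopGroupoid

variable {Γ : Type u} [TopologicalSpace Γ] {G : TopGroupoid Γ}

lemma IsEtale.continuous_r (hG : G.IsEtale) : Continuous G.r :=
  (hG.continuous.comp G.continuous_inv).congr G.s_inv

lemma IsEtale.isLocalHomeomorph_r (hG : G.IsEtale) : IsLocalHomeomorph G.r := by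
  have h := hG.comp G.invHomeo.isLocalHomeomorph
  rwa [show G.s ∘ G.invHomeo = G.r from funext G.s_inv] at h

lemma IsEtale.isClopen_unitSpace [T2Space Γ] (hG : G.IsEtale) : IsClopen G.unitSpace := by
  refine ⟨?_, hG.isOpenMap.isOpen_range⟩
  rw [show G.unitSpace = {u | G.s u = u} from Set.ext fun _ => G.mem_unitSpace]
  exact isClosed_eq hG.continuous continuous_id

lemma IsEtale.exists_restrict_unitSpace [T2Space Γ] (hG : G.IsEtale) (f : C_c(Γ, ℂ)) :
    ∃ f₀ : C_c(Γ, ℂ), ∀ γ, f₀ γ = if γ ∈ G.unitSpace then f γ else 0 :=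
  ⟨⟨⟨G.unitSpace.indicator f, hG.isClopen_unitSpace.continuous_indicator f.continuous⟩,
    f.hasCompactSupport.mono (support_indicator.trans_subset inter_subset_right)⟩,
    fun _ => indicator_apply _ _ _⟩

lemma IsEtale.finite_conv_support (hG : G.IsEtale) {f : Γ → ℂ} (hf : HasCompactSupport f)
    (g : Γ → ℂ) (γ : Γ) :
    ({η | G.r η = G.r γ} ∩ support fun η => f η * g (G.mul (G.inv η) γ)).Finite := by
  refine (hG.isLocalHomeomorph_r.isLocallyInjective.finite_inter_preimage_singleton hf
    (G.r γ)).subset fun η ⟨hη, hne⟩ => ?_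
  exact ⟨subset_tsupport _ (left_ne_zero_of_mul hne), hη⟩

lemma IsEtale.conv_finset_sum_left (hG : G.IsEtale) {ι : Type*} (s : Finset ι) {F : ι → Γ → ℂ}
    (hF : ∀ i ∈ s, HasCompactSupport (F i)) (g : Γ → ℂ) :
    G.conv (∑ i ∈ s, F i) g = ∑ i ∈ s, G.conv (F i) g := by
  ext γ
  simp only [conv, Finset.sum_apply, Finset.sum_mul, finsum_mem_def]
  rw [← finsum_sum_comm s _ fun i hi =>
    (hG.finite_conv_support (hF i hi) g γ).subset support_indicator.subset]
  refine finsum_congr fun η => ?_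
  by_cases hη : G.r η = G.r γ <;> simp [hη]

lemma conv_eq_indicator {e : OpenPartialHomeomorph Γ Γ} (he : ⇑e = G.r) {f : Γ → ℂ}
    (hf : tsupport f ⊆ e.source) (g : Γ → ℂ) :
    G.conv f g = (G.r ⁻¹' e.target).indicator
      fun γ => f (e.symm (G.r γ)) * g (G.mul (G.inv (e.symm (G.r γ))) γ) := by
  ext γ
  set F := {η | G.r η = G.r γ}.indicator fun η => f η * g (G.mul (G.inv η) γ)
  have hunique : ∀ η, F η ≠ 0 → G.r γ ∈ e.target ∧ e.symm (G.r γ) = η := by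
    intro η hne
    obtain ⟨hη, hne⟩ := indicator_apply_ne_zero.mp hne
    have hsrc : η ∈ e.source := hf (subset_tsupport _ (left_ne_zero_of_mul hne))
    rw [← show G.r η = G.r γ from hη, ← he]
    exact ⟨e.map_source hsrc, e.left_inv hsrc⟩
  rw [conv, finsum_mem_def]
  by_cases hm : G.r γ ∈ e.target
  · have hr₀ : G.r (e.symm (G.r γ)) = G.r γ := (congrFun he _).symm.trans (e.right_inv hm)
    rw [indicator_of_mem (show γ ∈ G.r ⁻¹' e.target from hm), finsum_eq_single F (e.symm (G.r γ))
      fun η hne => by_contra fun h => hne (hunique η h).2.symm]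
    simp only [F, indicator_apply, mem_ofPred_eq, hr₀, if_true]
  · rw [indicator_of_notMem (show γ ∉ G.r ⁻¹' e.target from hm)]
    exact finsum_eq_zero_of_forall_eq_zero fun η => by_contra fun h => hm (hunique η h).1

lemma continuous_conv_of_tsupport_subset [T2Space Γ] (hr : Continuous G.r)
    {e : OpenPartialHomeomorph Γ Γ} (he : ⇑e = G.r) {f g : Γ → ℂ} (hfc : Continuous f)
    (hgc : Continuous g) (hf : HasCompactSupport f) (hfe : tsupport f ⊆ e.source) :
    Continuous (G.conv f g) := by
  rw [conv_eq_indicator he hfe]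
  set O := G.r ⁻¹' e.target
  have hO : IsOpen O := e.open_target.preimage hr
  have hr₀ : ∀ γ ∈ O, G.r (e.symm (G.r γ)) = G.r γ := fun γ hγ =>
    (congrFun he _).symm.trans (e.right_inv hγ)
  have hη₀ : ContinuousOn (fun γ => e.symm (G.r γ)) O :=
    e.continuousOn_symm.comp hr.continuousOn fun _ hγ => hγ
  have hψ : ContinuousOn (fun γ => f (e.symm (G.r γ)) * g (G.mul (G.inv (e.symm (G.r γ))) γ)) O :=
    (hfc.comp_continuousOn hη₀).mul <| hgc.comp_continuousOn <|
      G.continuousOn_mul.comp ((G.continuous_inv.comp_continuousOn hη₀).prodMk continuousOn_id)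
        fun γ hγ => show G.s (G.inv (e.symm (G.r γ))) = G.r γ by rw [G.s_inv, hr₀ γ hγ]
  -- the indicator vanishes off the closed set `r⁻¹(e(tsupport f)) ⊆ O`
  have hK : IsClosed (G.r ⁻¹' (e '' tsupport f)) :=
    ((hf.image_of_continuousOn (e.continuousOn.mono hfe)).isClosed).preimage hr
  have hsupp : tsupport (O.indicator fun γ =>
      f (e.symm (G.r γ)) * g (G.mul (G.inv (e.symm (G.r γ))) γ)) ⊆ O := by
    refine (closure_minimal (fun γ hγ => ?_) hK).trans ?_
    · obtain ⟨hγO, hne⟩ := indicator_apply_ne_zero.mp hγ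
      exact ⟨e.symm (G.r γ), subset_tsupport _ (left_ne_zero_of_mul hne), e.right_inv hγO⟩
    · rintro γ ⟨η, hη, hγ⟩
      rw [mem_preimage, ← hγ]
      exact e.map_source (hfe hη)
  refine continuous_of_tsupport fun γ hγ => ?_
  refine (hψ.continuousAt (hO.mem_nhds (hsupp hγ))).congr ?_
  filter_upwards [hO.mem_nhds (hsupp hγ)] with x hx
  rw [indicator_of_mem hx]

lemma IsEtale.exists_bisection_sum_eq [T2Space Γ] [LocallyCompactSpace Γ] (hG : G.IsEtale)
    (f : C_c(Γ, ℂ)) :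
    ∃ (n : ℕ) (F : Fin n → C_c(Γ, ℂ)) (eS eR : Fin n → OpenPartialHomeomorph Γ Γ),
      (∀ i, ⇑(eS i) = G.s ∧ ⇑(eR i) = G.r ∧ tsupport (F i) ⊆ (eS i).source ∩ (eR i).source) ∧
        ∑ i, F i = f := by
  choose eR heR hr using hG.isLocalHomeomorph_r
  choose eS heS hs using hG
  set U : Γ → Set Γ := fun γ => (eS γ).source ∩ (eR γ).source
  obtain ⟨t, ht⟩ := f.hasCompactSupport.isCompact.elim_finite_subcover U
    (fun γ => (eS γ).open_source.inter (eR γ).open_source)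
    fun γ _ => mem_iUnion.mpr ⟨γ, heS γ, heR γ⟩
  set γs : Fin t.card → Γ := fun i => t.equivFin.symm i
  have hcov : tsupport f ⊆ ⋃ i, U (γs i) := fun x hx => by
    obtain ⟨γ, hγ, hxγ⟩ := mem_iUnion₂.mp (ht hx)
    exact mem_iUnion.mpr ⟨t.equivFin ⟨γ, hγ⟩, by simpa [γs] using hxγ⟩
  obtain ⟨χ, hχsupp, hχsum, -, -⟩ := exists_continuous_sum_one_of_isOpen_isCompact
    (fun i => (eS (γs i)).open_source.inter (eR (γs i)).open_source)
    f.hasCompactSupport.isCompact hcov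
  refine ⟨t.card, fun i => ⟨⟨fun x => (χ i x : ℂ) * f x, by fun_prop⟩,
    f.hasCompactSupport.mul_left⟩, fun i => eS (γs i), fun i => eR (γs i),
    fun i => ⟨(hs _).symm, (hr _).symm, ?_⟩, ?_⟩
  · refine (tsupport_mul_subset_left.trans ?_).trans (hχsupp i)
    exact closure_mono fun x hx => by simpa using hx
  · ext x
    simp only [CompactlySupportedContinuousMap.coe_sum, Finset.sum_apply,
      CompactlySupportedContinuousMap.coe_mk, ContinuousMap.coe_mk, ← Finset.sum_mul]
    by_cases hx : x ∈ tsupport f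
    · have h1 := hχsum hx
      simp only [Finset.sum_apply, Pi.one_apply] at h1
      rw [← Complex.ofReal_sum, h1, Complex.ofReal_one, one_mul]
    · rw [image_eq_zero_of_notMem_tsupport hx, mul_zero]

lemma IsEtale.exists_coe_eq_conv [T2Space Γ] [LocallyCompactSpace Γ] (hG : G.IsEtale)
    (f g : C_c(Γ, ℂ)) : ∃ h : C_c(Γ, ℂ), ⇑h = G.conv f g := by
  obtain ⟨n, F, eS, eR, hF, rfl⟩ := hG.exists_bisection_sum_eq f
  have hcont : Continuous (G.conv ⇑(∑ i, F i) g) := by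
    rw [CompactlySupportedContinuousMap.coe_sum,
      hG.conv_finset_sum_left _ (fun i _ => (F i).hasCompactSupport), Finset.sum_fn]
    exact continuous_finsetSum _ fun i _ => continuous_conv_of_tsupport_subset hG.continuous_r
      (hF i).2.1 (F i).continuous g.continuous (F i).hasCompactSupport
      ((hF i).2.2.trans inter_subset_right)
  exact ⟨⟨⟨_, hcont⟩, G.hasCompactSupport_conv hG.continuous hG.continuous_r
    (∑ i, F i).hasCompactSupport g.hasCompactSupport⟩, rfl⟩

variable (G) in
noncomputable def starCc (f : C_c(Γ, ℂ)) : C_c(Γ, ℂ) where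
  toFun := G.starFun f
  continuous_toFun := Complex.continuous_conj.comp (f.continuous.comp G.continuous_inv)
  hasCompactSupport' :=
    (f.hasCompactSupport.comp_homeomorph G.invHomeo).comp_left (g := starRingEnd ℂ) (map_zero _)

lemma IsEtale.norm_sq_le_norm_conv_starFun (hG : G.IsEtale) (f : C_c(Γ, ℂ)) (g : Γ) :
    ‖f g‖ ^ 2 ≤ ‖G.conv (G.starFun f) f (G.s g)‖ := by
  set u := G.s g
  have hru : G.r u = u := G.r_eq_self_of_s_eq_self (G.s_s g)
  set Φ := fun η => G.starFun f η * f (G.mul (G.inv η) u)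
  have hΦ : ∀ η, G.r η = u → Φ η = ((‖f (G.inv η)‖ ^ 2 : ℝ) : ℂ) := fun η hη => by
    have hs : G.s (G.inv η) = u := by rw [G.s_inv, hη]
    simp only [Φ, starFun, ← hs, G.mul_unit, Complex.conj_mul', Complex.ofReal_pow]
  have hfin : ({η | G.r η = G.r u} ∩ support Φ).Finite :=
    hG.finite_conv_support (G.starCc f).hasCompactSupport f u
  set T := hfin.toFinset
  have hT : ∀ η ∈ T, G.r η = u := fun η hη =>
    ((hfin.mem_toFinset.mp hη).1 : G.r η = G.r u).trans hru
  have hconv : G.conv (G.starFun f) f u = ((∑ η ∈ T, ‖f (G.inv η)‖ ^ 2 : ℝ) : ℂ) := by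
    rw [conv, finsum_mem_eq_sum _ hfin, Complex.ofReal_sum]
    exact Finset.sum_congr rfl fun η hη => hΦ η (hT η hη)
  rw [hconv, Complex.norm_real, Real.norm_of_nonneg (by positivity)]
  rcases eq_or_ne (f g) 0 with h0 | h0
  · rw [h0, norm_zero, zero_pow two_ne_zero]
    positivity
  · have hmem : G.inv g ∈ T := by
      refine hfin.mem_toFinset.mpr ⟨show G.r (G.inv g) = G.r u by rw [G.r_inv, hru], ?_⟩
      rw [mem_support, hΦ _ (G.r_inv g), G.inv_inv]
      exact_mod_cast pow_ne_zero 2 (norm_ne_zero_iff.mpr h0)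
    simpa only [G.inv_inv] using
      Finset.single_le_sum (f := fun η => ‖f (G.inv η)‖ ^ 2) (fun _ _ => by positivity) hmem

end TopGroupoid

namespace ReducedCStarAlg

open TopGroupoid

variable {Γ : Type u} [TopologicalSpace Γ] {G : TopGroupoid Γ} (S : ReducedCStarAlg G)

lemma π_single_apply (u : Γ) (f : C_c(Γ, ℂ)) (γ ξ : G.fiber u) :
    S.π u f (lp.single 2 γ 1) ξ = f (G.mul ξ (G.inv γ)) := by
  rw [← delta_eq_single, S.π_apply]

noncomputable def πₗ (u : Γ) : C_c(Γ, ℂ) →ₗ[ℂ] (ℓ²(G.fiber u) →L[ℂ] ℓ²(G.fiber u)) where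
  toFun := S.π u
  map_add' f g := lp.continuousLinearMap_ext_single fun γ ξ => by
    simp [π_single_apply]
  map_smul' c f := lp.continuousLinearMap_ext_single fun γ ξ => by
    simp [π_single_apply]

noncomputable def regularRep (u : Γ) :
    S.A →L[ℂ] (ℓ²(G.fiber u) →L[ℂ] ℓ²(G.fiber u)) :=
  (S.πₗ u).extendOfNorm S.j

noncomputable def evalCLM (g : Γ) : S.A →L[ℂ] ℂ :=
  lp.evalCLM ℂ _ 2 (⟨g, rfl⟩ : G.fiber (G.s g)) ∘L
    ContinuousLinearMap.apply ℂ _ (lp.single 2 ⟨G.s g, G.s_s g⟩ 1) ∘L S.regularRep (G.s g)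

lemma norm_π_le_of_isBisection (u : Γ) {f : C_c(Γ, ℂ)} {V : Set Γ} (hV : G.IsBisection V)
    (hfV : support f ⊆ V) {C : ℝ} (hC : 0 ≤ C) (hfC : ∀ γ, ‖f γ‖ ≤ C) : ‖S.π u f‖ ≤ C := by
  refine lp.opNorm_le_of_subsingleton_rows_cols hC (fun ξ γ γ' hγ hγ' => ?_)
    (fun ξ ξ' γ hξ hξ' => ?_) fun ξ γ => by rw [π_single_apply]; exact hfC _
  all_goals rw [π_single_apply] at *
  · have hr : ∀ γ : G.fiber u, G.r (G.mul ξ (G.inv γ)) = G.r ξ := fun γ =>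
      G.r_mul _ _ (by rw [G.r_inv, ξ.2, γ.2])
    have heq := hV.2 (hfV hγ) (hfV hγ') ((hr γ).trans (hr γ').symm)
    apply Subtype.ext
    rw [← G.inv_mul_inv_mul_cancel (ξ.2.trans γ.2.symm), heq,
      G.inv_mul_inv_mul_cancel (ξ.2.trans γ'.2.symm)]
  · have hs : ∀ ξ : G.fiber u, G.s (G.mul ξ (G.inv γ)) = G.r γ := fun ξ => by
      rw [G.s_mul _ _ (by rw [G.r_inv, ξ.2, γ.2]), G.s_inv]
    have heq := hV.1 (hfV hξ) (hfV hξ') ((hs ξ).trans (hs ξ').symm)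
    apply Subtype.ext
    rw [← G.inv_mul_cancel_right (ξ.2.trans γ.2.symm), heq,
      G.inv_mul_cancel_right (ξ'.2.trans γ.2.symm)]

variable [T2Space Γ] [LocallyCompactSpace Γ]

lemma bddAbove_norm_π (hG : G.IsEtale) (f : C_c(Γ, ℂ)) :
    BddAbove (range fun u => ‖S.π u f‖) := by
  obtain ⟨n, F, eS, eR, hF, rfl⟩ := hG.exists_bisection_sum_eq f
  choose C hC using fun i =>
    (F i).continuous.bounded_above_of_compact_support (F i).hasCompactSupport
  refine ⟨∑ i, max (C i) 0, forall_mem_range.mpr fun u => ?_⟩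
  have hbisection : ∀ i, G.IsBisection ((eS i).source ∩ (eR i).source) := fun i =>
    ⟨(hF i).1 ▸ (eS i).injOn.mono inter_subset_left,
      (hF i).2.1 ▸ (eR i).injOn.mono inter_subset_right⟩
  change ‖S.πₗ u (∑ i, F i)‖ ≤ _
  rw [map_sum]
  exact (norm_sum_le _ _).trans <| Finset.sum_le_sum fun i _ =>
    S.norm_π_le_of_isBisection u (hbisection i) ((subset_tsupport _).trans (hF i).2.2)
      (le_max_right _ _) fun γ => (hC i γ).trans (le_max_left _ _)

lemma norm_π_le_norm_j (hG : G.IsEtale) {u : Γ} (hu : u ∈ G.unitSpace) (f : C_c(Γ, ℂ)) :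
    ‖S.π u f‖ ≤ ‖S.j f‖ := by
  rw [S.norm_j]
  refine le_ciSup (f := fun v : G.unitSpace => ‖S.π v f‖) ?_ ⟨u, hu⟩
  exact (S.bddAbove_norm_π hG f).mono (range_comp_subset_range Subtype.val fun v => ‖S.π v f‖)

lemma regularRep_j (hG : G.IsEtale) {u : Γ} (hu : u ∈ G.unitSpace) (f : C_c(Γ, ℂ)) :
    S.regularRep u (S.j f) = S.π u f :=
  LinearMap.extendOfNorm_eq S.dense_range
    ⟨1, fun f => (one_mul ‖S.j f‖).symm ▸ S.norm_π_le_norm_j hG hu f⟩ f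

lemma norm_regularRep_apply_le (hG : G.IsEtale) {u : Γ} (hu : u ∈ G.unitSpace) (a : S.A) :
    ‖S.regularRep u a‖ ≤ ‖a‖ :=
  (LinearMap.norm_extendOfNorm_apply_le S.dense_range 1
    (fun f => (one_mul ‖S.j f‖).symm ▸ S.norm_π_le_norm_j hG hu f) a).trans_eq (one_mul _)

lemma evalCLM_j (hG : G.IsEtale) (f : C_c(Γ, ℂ)) (g : Γ) : S.evalCLM g (S.j f) = f g := by
  simp only [evalCLM, ContinuousLinearMap.comp_apply, ContinuousLinearMap.apply_apply,
    S.regularRep_j hG ⟨g, rfl⟩, lp.evalCLM, LinearMap.mkContinuous_apply, lp.evalₗ_apply,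
    π_single_apply, G.inv_eq_self_of_s_eq_self (G.s_s g), G.mul_unit]

lemma regularRep_single_apply (hG : G.IsEtale) {u : Γ} (a : S.A) (γ ξ : G.fiber u) :
    S.regularRep u a (lp.single 2 γ 1) ξ = S.evalCLM (G.mul ξ (G.inv γ)) a := by
  have hcont : Continuous fun a => S.regularRep u a (lp.single 2 γ 1) ξ :=
    (lp.evalCLM ℂ (fun _ : G.fiber u => ℂ) 2 ξ ∘L
      ContinuousLinearMap.apply ℂ ℓ²(G.fiber u) (lp.single 2 γ 1) ∘L S.regularRep u).continuous
  refine S.dense_range.induction_on a (isClosed_eq hcont (S.evalCLM _).continuous) fun f => ?_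
  rw [S.regularRep_j hG ⟨γ, γ.2⟩, π_single_apply, evalCLM_j S hG]

lemma eq_zero_of_forall_evalCLM_eq_zero (hG : G.IsEtale) {b : S.A}
    (hb : ∀ g, S.evalCLM g b = 0) : b = 0 := by
  have hρ : ∀ u, S.regularRep u b = 0 := fun u =>
    lp.continuousLinearMap_ext_single fun γ ξ => by
      rw [S.regularRep_single_apply hG, hb]
      rfl
  have hle : ∀ f, ‖S.j f‖ ≤ ‖S.j f - b‖ := fun f => by
    rw [S.norm_j]
    refine Real.iSup_le (fun u => ?_) (norm_nonneg _)
    rw [← S.regularRep_j hG u.2, ← sub_zero (S.regularRep _ (S.j f)), ← hρ u, ← map_sub]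
    exact S.norm_regularRep_apply_le hG u.2 _
  refine norm_le_zero_iff.mp (le_of_forall_pos_le_add fun δ hδ => ?_)
  obtain ⟨f, hf⟩ := S.dense_range.exists_dist_lt b (half_pos hδ)
  rw [dist_eq_norm] at hf
  calc ‖b‖ ≤ ‖S.j f‖ + ‖b - S.j f‖ := norm_le_norm_add_norm_sub' ..
    _ ≤ 0 + δ := by linarith [hle f, norm_sub_rev (S.j f) b]

lemma norm_evalCLM_sq_le (hG : G.IsEtale) (g : Γ) (x : S.A) :
    ‖S.evalCLM g x‖ ^ 2 ≤ ‖S.evalCLM (G.s g) (star x * x)‖ := by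
  refine S.dense_range.induction_on x (isClosed_le (by fun_prop) (by fun_prop)) fun f => ?_
  obtain ⟨h, hh⟩ := hG.exists_coe_eq_conv (G.starCc f) f
  rw [S.j_star f (G.starCc f) rfl, S.j_mul _ _ h hh, S.evalCLM_j hG, S.evalCLM_j hG, hh]
  exact hG.norm_sq_le_norm_conv_starFun f g

lemma evalCLM_comp_of_isRestrictionExpectation (hG : G.IsEtale) {E : S.A →L[ℂ] S.A}
    (hE : IsRestrictionExpectation S E) {u : Γ} (hu : u ∈ G.unitSpace) :
    S.evalCLM u ∘L E = S.evalCLM u := by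
  refine ContinuousLinearMap.ext fun a =>
    S.dense_range.induction_on a (isClosed_eq (by fun_prop) (by fun_prop)) fun f => ?_
  obtain ⟨f₀, hf₀⟩ := hG.exists_restrict_unitSpace f
  rw [ContinuousLinearMap.comp_apply, hE.2 f f₀ hf₀, S.evalCLM_j hG, S.evalCLM_j hG, hf₀,
    if_pos hu]

end ReducedCStarAlg

/-- For a locally compact Hausdorff étale groupoid `G`, the conditional
expectation `E : C*_r(G) → C₀(G⁰)` extending restriction is faithful: `E (b* b) = 0`
implies `b = 0`. -/
theorem conditional_expectation_faithful
    {Γ : Type u} [TopologicalSpace Γ] [T2Space Γ] [LocallyCompactSpace Γ]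
    (G : TopGroupoid Γ) (hEtale : G.IsEtale) (S : ReducedCStarAlg G)
    (E : S.A →L[ℂ] S.A) (hE : IsRestrictionExpectation S E) :
    ∀ b : S.A, E (star b * b) = 0 → b = 0 := by
  intro b hb
  refine S.eq_zero_of_forall_evalCLM_eq_zero hEtale fun g => ?_
  have hunit : S.evalCLM (G.s g) (star b * b) = 0 := by
    rw [← S.evalCLM_comp_of_isRestrictionExpectation hEtale hE ⟨g, rfl⟩,
      ContinuousLinearMap.comp_apply, hb, map_zero]
  simpa [hunit] using S.norm_evalCLM_sq_le hEtale g b
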